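/- arXiv:1612.01767 — 4 statements merged into one kernel-verified Lean document; each statement's English description precedes it below -/
import Mathlib

section
/- For nonnegative n×n real matrices A and B, the spectral radius of the Hadamard (entrywise) product satisfies ρ(A ∘ B) ≤ ρ(AB∘BA)^{1/2} ≤ ρ(AB). -/
open Matrix

/-- Spectral radius of a real matrix: max modulus of its (complex) eigenvalues. -/
noncomputable def specRad {N : Type*} [Fintype N] [DecidableEq N] (A : Matrix N N ℝ) : ℝ :=
  (spectralRadius ℂ (A.map Complex.ofReal)).toReal

/-- Operator norm induced by the Euclidean (ℓ²) norm. -/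
noncomputable def l2OpNorm {N : Type*} [Fintype N] [DecidableEq N] (A : Matrix N N ℝ) : ℝ :=
  ‖Matrix.toEuclideanCLM (𝕜 := ℝ) A‖

/-- Entrywise α-th power (with the convention 0^0 = 1, as for `Real.rpow`). -/
noncomputable def hadPow {N : Type*} (A : Matrix N N ℝ) (α : ℝ) : Matrix N N ℝ :=
  fun i j => A i j ^ α

/-!
Both inequalities come from Gelfand's formula `ρ(M) = lim ‖Mᵏ‖^(1/k)` for the `ℓ∞` operator norm,
which is monotone on entrywise nonnegative matrices and submultiplicative for Hadamard products.
Entrywise one has `(A ∘ B)(B ∘ A) ≤ (AB) ∘ (BA)` and `(X ∘ Y)ᵏ ≤ Xᵏ ∘ Yᵏ`, whence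
`ρ(A ∘ B)² ≤ ρ((A ∘ B)²) ≤ ρ((AB) ∘ (BA)) ≤ ρ(AB) ρ(BA) = ρ(AB)²`.
-/

open Filter Topology
open scoped ENNReal

namespace Matrix

section EntrywiseOrder

variable {l m n R : Type*} [Fintype m] [Semiring R] [PartialOrder R] [IsOrderedRing R]

lemma mul_apply_nonneg {C : Matrix l m R} {D : Matrix m n R} (hC : ∀ i j, 0 ≤ C i j)
    (hD : ∀ i j, 0 ≤ D i j) (i : l) (j : n) : 0 ≤ (C * D) i j :=
  Finset.sum_nonneg fun k _ => mul_nonneg (hC i k) (hD k j)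

lemma mul_apply_le_mul_apply {C C' : Matrix l m R} {D D' : Matrix m n R} (hC : ∀ i j, 0 ≤ C i j)
    (hD : ∀ i j, 0 ≤ D i j) (hCC' : ∀ i j, C i j ≤ C' i j) (hDD' : ∀ i j, D i j ≤ D' i j)
    (i : l) (j : n) : (C * D) i j ≤ (C' * D') i j :=
  Finset.sum_le_sum fun k _ =>
    mul_le_mul (hCC' i k) (hDD' k j) (hD k j) ((hC i k).trans (hCC' i k))

lemma pow_apply_le_pow_apply [DecidableEq m] {C D : Matrix m m R} (hC : ∀ i j, 0 ≤ C i j)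
    (hCD : ∀ i j, C i j ≤ D i j) (k : ℕ) (i j : m) : (C ^ k) i j ≤ (D ^ k) i j := by
  induction k generalizing i j with
  | zero => rfl
  | succ k ih =>
    rw [pow_succ, pow_succ]
    exact mul_apply_le_mul_apply (pow_apply_nonneg hC k) hC ih hCD i j

end EntrywiseOrder

section Hadamard

variable {l m n R : Type*} [CommSemiring R] [PartialOrder R] [IsOrderedRing R]

lemma hadamard_apply_nonneg {X Y : Matrix l m R} (hX : ∀ i j, 0 ≤ X i j) (hY : ∀ i j, 0 ≤ Y i j)
    (i : l) (j : m) : 0 ≤ (X ⊙ Y) i j :=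
  mul_nonneg (hX i j) (hY i j)

lemma hadamard_mul_hadamard_apply_le [Fintype m] {X Y : Matrix l m R} {X' Y' : Matrix m n R}
    (hX : ∀ i j, 0 ≤ X i j) (hY : ∀ i j, 0 ≤ Y i j) (hX' : ∀ i j, 0 ≤ X' i j)
    (hY' : ∀ i j, 0 ≤ Y' i j) (i : l) (j : n) :
    ((X ⊙ Y) * (X' ⊙ Y')) i j ≤ ((X * X') ⊙ (Y * Y')) i j := by
  simp only [hadamard_apply, mul_apply, Finset.sum_mul]
  refine Finset.sum_le_sum fun k _ => ?_
  calc X i k * Y i k * (X' k j * Y' k j) = X i k * X' k j * (Y i k * Y' k j) := by ring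
    _ ≤ X i k * X' k j * ∑ k', Y i k' * Y' k' j :=
      mul_le_mul_of_nonneg_left
        (Finset.single_le_sum (fun k' _ => mul_nonneg (hY i k') (hY' k' j)) (Finset.mem_univ k))
        (mul_nonneg (hX i k) (hX' k j))

lemma hadamard_pow_apply_le [Fintype m] [DecidableEq m] {X Y : Matrix m m R} (hX : ∀ i j, 0 ≤ X i j)
    (hY : ∀ i j, 0 ≤ Y i j) (k : ℕ) (i j : m) : ((X ⊙ Y) ^ k) i j ≤ ((X ^ k) ⊙ (Y ^ k)) i j := by
  induction k generalizing i j with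
  | zero => simp only [pow_zero, hadamard_apply, one_apply]; split_ifs <;> simp
  | succ k ih =>
    have hXY := hadamard_apply_nonneg hX hY
    rw [pow_succ, pow_succ, pow_succ]
    exact (mul_apply_le_mul_apply (pow_apply_nonneg hXY k) hXY ih (fun _ _ => le_rfl) i j).trans
      (hadamard_mul_hadamard_apply_le (pow_apply_nonneg hX k) (pow_apply_nonneg hY k) hX hY i j)

end Hadamard

lemma map_ofReal_mul {l m n : Type*} [Fintype m] (C : Matrix l m ℝ) (D : Matrix m n ℝ) :
    (C * D).map Complex.ofReal = C.map Complex.ofReal * D.map Complex.ofReal :=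
  Matrix.map_mul (f := Complex.ofRealHom)

lemma map_ofReal_pow {m : Type*} [Fintype m] [DecidableEq m] (M : Matrix m m ℝ) (k : ℕ) :
    (M ^ k).map Complex.ofReal = M.map Complex.ofReal ^ k :=
  map_pow Complex.ofRealHom.mapMatrix M k

section LinftyOpNorm

attribute [local instance] Matrix.linftyOpSeminormedAddCommGroup Matrix.linftyOpNormedAddCommGroup

variable {m n : Type*} [Fintype m] [Fintype n]

lemma nnnorm_entry_le_linfty_opNNNorm {α : Type*} [SeminormedAddCommGroup α] (X : Matrix m n α)
    (i : m) (j : n) : ‖X i j‖₊ ≤ ‖X‖₊ := by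
  rw [linfty_opNNNorm_def]
  exact (Finset.single_le_sum (f := fun j => ‖X i j‖₊) (fun _ _ => zero_le)
    (Finset.mem_univ j)).trans (Finset.le_sup (f := fun i => ∑ j, ‖X i j‖₊) (Finset.mem_univ i))

lemma linfty_opNNNorm_hadamard_le {α : Type*} [SeminormedRing α] (X Y : Matrix m n α) :
    ‖X ⊙ Y‖₊ ≤ ‖X‖₊ * ‖Y‖₊ := by
  rw [linfty_opNNNorm_def X, NNReal.finset_sup_mul, linfty_opNNNorm_def]
  refine Finset.sup_mono_fun fun i _ => ?_
  rw [Finset.sum_mul]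
  exact Finset.sum_le_sum fun j _ =>
    (nnnorm_mul_le _ _).trans (mul_le_mul_right (nnnorm_entry_le_linfty_opNNNorm Y i j) _)

lemma linfty_opNNNorm_le_of_apply_le {C D : Matrix m n ℝ} (hC : ∀ i j, 0 ≤ C i j)
    (hCD : ∀ i j, C i j ≤ D i j) : ‖C‖₊ ≤ ‖D‖₊ := by
  rw [linfty_opNNNorm_def, linfty_opNNNorm_def]
  refine Finset.sup_mono_fun fun i _ => Finset.sum_le_sum fun j _ => ?_
  rw [← NNReal.coe_le_coe, coe_nnnorm, coe_nnnorm, Real.norm_of_nonneg (hC i j),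
    Real.norm_of_nonneg ((hC i j).trans (hCD i j))]
  exact hCD i j

lemma linfty_opNNNorm_map_ofReal (M : Matrix m n ℝ) : ‖M.map Complex.ofReal‖₊ = ‖M‖₊ := by
  simp only [linfty_opNNNorm_def, map_apply, Complex.nnnorm_real]

end LinftyOpNorm

end Matrix

section SpectralRadius

variable {𝕜 A : Type*} [NormedField 𝕜]

lemma spectralRadius_eq_iSup_diff_zero [Ring A] [Algebra 𝕜 A] (a : A) :
    spectralRadius 𝕜 a = ⨆ k ∈ spectrum 𝕜 a \ {0}, (‖k‖₊ : ℝ≥0∞) := by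
  refine le_antisymm (iSup₂_le fun k hk => ?_) (iSup₂_le fun k hk => le_iSup₂ (α := ℝ≥0∞) k hk.1)
  rcases eq_or_ne k 0 with rfl | h
  · simp
  · exact le_iSup₂ (α := ℝ≥0∞) k ⟨hk, h⟩

lemma spectralRadius_mul_comm [Ring A] [Algebra 𝕜 A] (a b : A) :
    spectralRadius 𝕜 (a * b) = spectralRadius 𝕜 (b * a) := by
  rw [spectralRadius_eq_iSup_diff_zero, spectralRadius_eq_iSup_diff_zero,
    spectrum.nonzero_mul_comm]

lemma spectralRadius_ne_top [NormedRing A] [NormedAlgebra 𝕜 A] [CompleteSpace A] (a : A) :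
    spectralRadius 𝕜 a ≠ ∞ := by
  refine ne_top_of_le_ne_top ?_ (spectrum.spectralRadius_le_pow_nnnorm_pow_one_div 𝕜 a 0)
  simp [ENNReal.mul_eq_top]

end SpectralRadius

section RealMatrix

attribute [local instance] Matrix.linftyOpNormedAddCommGroup Matrix.linftyOpNormedRing
  Matrix.linftyOpNormedAlgebra

variable {ι : Type*} [Fintype ι] [DecidableEq ι]

lemma linfty_opNNNorm_pow_one_div_tendsto_spectralRadius (M : Matrix ι ι ℝ) :
    Tendsto (fun k : ℕ => (‖M ^ k‖₊ : ℝ≥0∞) ^ (1 / k : ℝ)) atTop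
      (𝓝 (spectralRadius ℂ (M.map Complex.ofReal))) := by
  convert spectrum.pow_nnnorm_pow_one_div_tendsto_nhds_spectralRadius (M.map Complex.ofReal)
    using 4 with k
  rw [← map_ofReal_pow, linfty_opNNNorm_map_ofReal]

lemma specRad_le_of_apply_le {C D : Matrix ι ι ℝ} (hC : ∀ i j, 0 ≤ C i j)
    (hCD : ∀ i j, C i j ≤ D i j) : specRad C ≤ specRad D := by
  refine ENNReal.toReal_mono (spectralRadius_ne_top _) <|
    le_of_tendsto_of_tendsto' (linfty_opNNNorm_pow_one_div_tendsto_spectralRadius C)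
      (linfty_opNNNorm_pow_one_div_tendsto_spectralRadius D) fun k => ?_
  gcongr
  exact linfty_opNNNorm_le_of_apply_le (pow_apply_nonneg hC k) (pow_apply_le_pow_apply hC hCD k)

lemma specRad_hadamard_le {X Y : Matrix ι ι ℝ} (hX : ∀ i j, 0 ≤ X i j)
    (hY : ∀ i j, 0 ≤ Y i j) : specRad (X ⊙ Y) ≤ specRad X * specRad Y := by
  rw [specRad, specRad, specRad, ← ENNReal.toReal_mul]
  refine ENNReal.toReal_mono (ENNReal.mul_ne_top (spectralRadius_ne_top _)
    (spectralRadius_ne_top _)) <|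
    le_of_tendsto_of_tendsto' (linfty_opNNNorm_pow_one_div_tendsto_spectralRadius (X ⊙ Y))
      (ENNReal.Tendsto.mul (linfty_opNNNorm_pow_one_div_tendsto_spectralRadius X)
        (.inr (spectralRadius_ne_top _)) (linfty_opNNNorm_pow_one_div_tendsto_spectralRadius Y)
        (.inr (spectralRadius_ne_top _))) fun k => ?_
  rw [← ENNReal.mul_rpow_of_nonneg _ _ (by positivity), ← ENNReal.coe_mul]
  gcongr
  exact (linfty_opNNNorm_le_of_apply_le (pow_apply_nonneg (hadamard_apply_nonneg hX hY) k)
    (hadamard_pow_apply_le hX hY k)).trans (linfty_opNNNorm_hadamard_le _ _)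

lemma specRad_mul_comm (C D : Matrix ι ι ℝ) : specRad (C * D) = specRad (D * C) := by
  rw [specRad, specRad, map_ofReal_mul, map_ofReal_mul, spectralRadius_mul_comm]

lemma sq_specRad_le (M : Matrix ι ι ℝ) : specRad M ^ 2 ≤ specRad (M ^ 2) := by
  rw [specRad, specRad, ← ENNReal.toReal_pow, map_ofReal_pow]
  exact ENNReal.toReal_mono (spectralRadius_ne_top _)
    (spectrum.spectralRadius_pow_le _ 2 two_ne_zero)

end RealMatrix

theorem stmt0 {N : Type*} [Fintype N] [DecidableEq N] (A B : Matrix N N ℝ)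
    (hA : ∀ i j, 0 ≤ A i j) (hB : ∀ i j, 0 ≤ B i j) :
    specRad (A ⊙ B) ≤ specRad ((A * B) ⊙ (B * A)) ^ ((1 : ℝ) / 2) ∧
      specRad ((A * B) ⊙ (B * A)) ^ ((1 : ℝ) / 2) ≤ specRad (A * B) := by
  have lower : specRad (A ⊙ B) ^ 2 ≤ specRad ((A * B) ⊙ (B * A)) :=
    calc specRad (A ⊙ B) ^ 2 ≤ specRad ((A ⊙ B) ^ 2) := sq_specRad_le _
      _ = specRad ((A ⊙ B) * (B ⊙ A)) := by rw [sq, hadamard_comm B A]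
      _ ≤ _ := specRad_le_of_apply_le
          (mul_apply_nonneg (hadamard_apply_nonneg hA hB) (hadamard_apply_nonneg hB hA))
          (hadamard_mul_hadamard_apply_le hA hB hB hA)
  have upper : specRad ((A * B) ⊙ (B * A)) ≤ specRad (A * B) ^ 2 :=
    calc _ ≤ specRad (A * B) * specRad (B * A) :=
          specRad_hadamard_le (mul_apply_nonneg hA hB) (mul_apply_nonneg hB hA)
      _ = _ := by rw [specRad_mul_comm B A, sq]
  rw [← Real.sqrt_eq_rpow]
  exact ⟨Real.le_sqrt_of_sq_le lower, (Real.sqrt_le_left ENNReal.toReal_nonneg).mpr upper⟩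
end

section
/- Let A and B be nonnegative n×n real matrices and α ∈ [0,1]. Then the entrywise weighted geometric mean satisfies ρ(A^{(α)} ∘ B^{(1-α)}) ≤ ρ(A)^α ρ(B)^{1-α}, where A^{(α)} denotes the matrix with entries a_{ij}^α (with 0^0 = 1). -/
/-!
Equip real matrices with the ℓ∞ operator norm (maximal absolute row sum). By induction and
Hölder's inequality, every entry of `C ^ n`, where `C = A^(α) ∘ B^(1-α)`, is at most
`(A ^ n)ᵢⱼ ^ α * (B ^ n)ᵢⱼ ^ (1 - α)`; a second application of Hölder to the row sums gives
`‖C ^ n‖ ≤ ‖A ^ n‖ ^ α * ‖B ^ n‖ ^ (1 - α)`. Taking `n`-th roots and letting `n → ∞`,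
Gelfand's formula turns this into the inequality between spectral radii.
-/

open Matrix

open Filter Topology

attribute [local instance] Matrix.linftyOpNormedAddCommGroup Matrix.linftyOpNormedRing
  Matrix.linftyOpNormedAlgebra

theorem Real.sum_rpow_mul_rpow_one_sub_le {ι : Type*} (s : Finset ι) {x y : ι → ℝ}
    (hx : ∀ i ∈ s, 0 ≤ x i) (hy : ∀ i ∈ s, 0 ≤ y i) {a : ℝ} (ha₀ : 0 ≤ a) (ha₁ : a ≤ 1) :
    ∑ i ∈ s, x i ^ a * y i ^ (1 - a) ≤ (∑ i ∈ s, x i) ^ a * (∑ i ∈ s, y i) ^ (1 - a) := by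
  rcases ha₀.eq_or_lt with rfl | ha₀
  · simp
  rcases ha₁.eq_or_lt with rfl | ha₁
  · simp
  have hx' : ∀ i ∈ s, (x i ^ a) ^ a⁻¹ = x i := fun i hi => Real.rpow_rpow_inv (hx i hi) ha₀.ne'
  have hy' : ∀ i ∈ s, (y i ^ (1 - a)) ^ (1 - a)⁻¹ = y i := fun i hi =>
    Real.rpow_rpow_inv (hy i hi) (sub_pos.2 ha₁).ne'
  have := Real.inner_le_Lp_mul_Lq_of_nonneg s (.inv_one_sub_inv ha₀ ha₁)
    (fun i hi => Real.rpow_nonneg (hx i hi) a) (fun i hi => Real.rpow_nonneg (hy i hi) (1 - a))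
  rwa [Finset.sum_congr rfl hx', Finset.sum_congr rfl hy', one_div, one_div, inv_inv, inv_inv]
    at this

namespace Matrix

variable {m n : Type*} [Fintype m] [Fintype n]

theorem sum_apply_le_linfty_opNorm (M : Matrix m n ℝ) (i : m) : ∑ j, M i j ≤ ‖M‖ := by
  calc ∑ j, M i j ≤ ∑ j, ‖M i j‖ := Finset.sum_le_sum fun j _ => Real.le_norm_self _
    _ = ((∑ j, ‖M i j‖₊ : NNReal) : ℝ) := by push_cast; rfl
    _ ≤ ‖M‖ := by
      rw [linfty_opNorm_def, NNReal.coe_le_coe]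
      exact Finset.le_sup (f := fun i => ∑ j, ‖M i j‖₊) (Finset.mem_univ i)

theorem linfty_opNorm_le_of_nonneg {M : Matrix m n ℝ} (hM : ∀ i j, 0 ≤ M i j)
    {r : ℝ} (hr : 0 ≤ r) (h : ∀ i, ∑ j, M i j ≤ r) : ‖M‖ ≤ r := by
  rw [linfty_opNorm_def, ← NNReal.coe_mk r hr, NNReal.coe_le_coe, Finset.sup_le_iff]
  intro i _
  rw [← NNReal.coe_le_coe]
  push_cast
  simpa only [Real.norm_of_nonneg (hM i _)] using h i

theorem linfty_opNorm_map_ofReal (M : Matrix m n ℝ) : ‖M.map Complex.ofReal‖ = ‖M‖ := by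
  simp only [linfty_opNorm_def, map_apply, Complex.nnnorm_real]

end Matrix

section GeometricMean

variable {N : Type*} {A B : Matrix N N ℝ}

theorem hadPow_nonneg (hA : ∀ i j, 0 ≤ A i j) (a : ℝ) (i j : N) : 0 ≤ hadPow A a i j :=
  Real.rpow_nonneg (hA i j) a

theorem hadPow_hadamard_hadPow_nonneg (hA : ∀ i j, 0 ≤ A i j) (hB : ∀ i j, 0 ≤ B i j)
    (a : ℝ) (i j : N) : 0 ≤ (hadPow A a ⊙ hadPow B (1 - a)) i j :=
  mul_nonneg (hadPow_nonneg hA a i j) (hadPow_nonneg hB (1 - a) i j)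

variable [Fintype N] [DecidableEq N]

theorem pow_hadPow_hadamard_hadPow_apply_le (hA : ∀ i j, 0 ≤ A i j) (hB : ∀ i j, 0 ≤ B i j)
    {a : ℝ} (ha₀ : 0 ≤ a) (ha₁ : a ≤ 1) (n : ℕ) (i j : N) :
    ((hadPow A a ⊙ hadPow B (1 - a)) ^ n) i j ≤ (A ^ n) i j ^ a * (B ^ n) i j ^ (1 - a) := by
  induction n generalizing j with
  | zero =>
    by_cases h : i = j
    · simp [h]
    · simpa [one_apply_ne h] using mul_nonneg (Real.rpow_nonneg le_rfl a)
        (Real.rpow_nonneg le_rfl (1 - a))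
  | succ n ih =>
    have hAn := pow_apply_nonneg hA n
    have hBn := pow_apply_nonneg hB n
    simp only [pow_succ, mul_apply]
    calc ∑ l, ((hadPow A a ⊙ hadPow B (1 - a)) ^ n) i l * (hadPow A a ⊙ hadPow B (1 - a)) l j
        ≤ ∑ l, ((A ^ n) i l * A l j) ^ a * ((B ^ n) i l * B l j) ^ (1 - a) := by
          refine Finset.sum_le_sum fun l _ => ?_
          rw [Real.mul_rpow (hAn i l) (hA l j), Real.mul_rpow (hBn i l) (hB l j),
            mul_mul_mul_comm]
          exact mul_le_mul_of_nonneg_right (ih l) (hadPow_hadamard_hadPow_nonneg hA hB a l j)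
      _ ≤ _ := Real.sum_rpow_mul_rpow_one_sub_le _
          (fun l _ => mul_nonneg (hAn i l) (hA l j)) (fun l _ => mul_nonneg (hBn i l) (hB l j))
          ha₀ ha₁

theorem norm_pow_hadPow_hadamard_hadPow_le (hA : ∀ i j, 0 ≤ A i j) (hB : ∀ i j, 0 ≤ B i j)
    {a : ℝ} (ha₀ : 0 ≤ a) (ha₁ : a ≤ 1) (n : ℕ) :
    ‖(hadPow A a ⊙ hadPow B (1 - a)) ^ n‖ ≤ ‖A ^ n‖ ^ a * ‖B ^ n‖ ^ (1 - a) := by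
  have hAn := pow_apply_nonneg hA n
  have hBn := pow_apply_nonneg hB n
  refine linfty_opNorm_le_of_nonneg (pow_apply_nonneg (hadPow_hadamard_hadPow_nonneg hA hB a) n)
    (by positivity) fun i => ?_
  calc ∑ j, ((hadPow A a ⊙ hadPow B (1 - a)) ^ n) i j
      ≤ ∑ j, (A ^ n) i j ^ a * (B ^ n) i j ^ (1 - a) :=
        Finset.sum_le_sum fun j _ => pow_hadPow_hadamard_hadPow_apply_le hA hB ha₀ ha₁ n i j
    _ ≤ (∑ j, (A ^ n) i j) ^ a * (∑ j, (B ^ n) i j) ^ (1 - a) :=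
        Real.sum_rpow_mul_rpow_one_sub_le _ (fun j _ => hAn i j) (fun j _ => hBn i j) ha₀ ha₁
    _ ≤ ‖A ^ n‖ ^ a * ‖B ^ n‖ ^ (1 - a) := by
        have hsA : 0 ≤ ∑ j, (A ^ n) i j := Finset.sum_nonneg fun j _ => hAn i j
        have hsB : 0 ≤ ∑ j, (B ^ n) i j := Finset.sum_nonneg fun j _ => hBn i j
        gcongr <;> first | assumption | linarith | exact sum_apply_le_linfty_opNorm _ i

end GeometricMean

theorem tendsto_norm_pow_rpow_specRad {N : Type*} [Fintype N] [DecidableEq N]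
    (M : Matrix N N ℝ) :
    Tendsto (fun n : ℕ => ‖M ^ n‖ ^ (1 / n : ℝ)) atTop (𝓝 (specRad M)) := by
  have hfin : spectralRadius ℂ (M.map Complex.ofReal) ≠ ⊤ :=
    ne_top_of_le_ne_top (by finiteness)
      (spectrum.spectralRadius_le_pow_nnnorm_pow_one_div ℂ (M.map Complex.ofReal) 0)
  refine ((ENNReal.tendsto_toReal hfin).comp
    (spectrum.pow_norm_pow_one_div_tendsto_nhds_spectralRadius _)).congr fun n => ?_
  rw [Function.comp_apply, ENNReal.toReal_ofReal (by positivity),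
    show M.map Complex.ofReal ^ n = (M ^ n).map Complex.ofReal from
      (M.map_pow Complex.ofRealHom n).symm, linfty_opNorm_map_ofReal]

theorem stmt2 {N : Type*} [Fintype N] [DecidableEq N] (A B : Matrix N N ℝ)
    (hA : ∀ i j, 0 ≤ A i j) (hB : ∀ i j, 0 ≤ B i j) (α : ℝ) (hα : α ∈ Set.Icc (0:ℝ) 1) :
    specRad (hadPow A α ⊙ hadPow B (1 - α)) ≤ specRad A ^ α * specRad B ^ (1 - α) := by
  obtain ⟨hα₀, hα₁⟩ := hα
  have hα₁' : 0 ≤ 1 - α := sub_nonneg.2 hα₁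
  have hroot (n : ℕ) : ‖(hadPow A α ⊙ hadPow B (1 - α)) ^ n‖ ^ (1 / n : ℝ) ≤
      (‖A ^ n‖ ^ (1 / n : ℝ)) ^ α * (‖B ^ n‖ ^ (1 / n : ℝ)) ^ (1 - α) :=
    calc _ ≤ (‖A ^ n‖ ^ α * ‖B ^ n‖ ^ (1 - α)) ^ (1 / n : ℝ) := by
          gcongr; exact norm_pow_hadPow_hadamard_hadPow_le hA hB hα₀ hα₁ n
      _ = _ := by
          rw [Real.mul_rpow (by positivity) (by positivity), ← Real.rpow_mul (norm_nonneg _),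
            ← Real.rpow_mul (norm_nonneg _), ← Real.rpow_mul (norm_nonneg _),
            ← Real.rpow_mul (norm_nonneg _), mul_comm α, mul_comm (1 - α)]
  exact le_of_tendsto_of_tendsto' (tendsto_norm_pow_rpow_specRad _)
    (((tendsto_norm_pow_rpow_specRad A).rpow_const (.inr hα₀)).mul
      ((tendsto_norm_pow_rpow_specRad B).rpow_const (.inr hα₁'))) hroot
end

section
/- Let A₁, …, A_m be nonnegative n×n real matrices and α₁, …, α_m > 0 with α₁ + ⋯ + α_m = 1. Then ρ(A₁^{(α₁)} ∘ A₂^{(α₂)} ∘ ⋯ ∘ A_m^{(α_m)}) ≤ ρ(A₁)^{α₁} ρ(A₂)^{α₂} ⋯ ρ(A_m)^{α_m}. -/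
open Matrix

/-- Hadamard weighted geometric mean `A₁^{(α₁)} ∘ ⋯ ∘ A_m^{(α_m)}`. -/
noncomputable def hadGeo {m : ℕ} {N : Type*} (A : Fin m → Matrix N N ℝ) (α : Fin m → ℝ) :
    Matrix N N ℝ :=
  fun i j => ∏ k, (A k i j) ^ (α k)

/-
By Hölder's inequality the weighted Hadamard geometric mean of nonnegative matrices is entrywise
supermultiplicative: `hadGeo A α * hadGeo C α ≤ hadGeo (fun k => A k * C k) α`. Hence
`hadGeo A α ^ p ≤ hadGeo (fun k => A k ^ p) α` entrywise, and since the Frobenius norm is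
monotone on nonnegative matrices and, by Hölder again, `‖hadGeo C α‖ ≤ ∏ ‖C k‖ ^ α k`, we get
`‖hadGeo A α ^ p‖ ≤ ∏ ‖A k ^ p‖ ^ α k`. Taking `p`-th roots and letting `p → ∞`, Gelfand's
formula turns this into the inequality between spectral radii.
-/

open Finset
open scoped ENNReal

theorem ENNReal.sum_prod_rpow_le_prod_sum_rpow {ι κ : Type*} [Fintype κ] (s : Finset ι)
    (f : ι → κ → ℝ≥0∞) {w : ι → ℝ} (hw : ∀ i ∈ s, 0 ≤ w i) (hw1 : ∑ i ∈ s, w i = 1) :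
    ∑ a, ∏ i ∈ s, f i a ^ w i ≤ ∏ i ∈ s, (∑ a, f i a) ^ w i := by
  let _ : MeasurableSpace κ := ⊤
  simpa [MeasureTheory.lintegral_fintype] using
    ENNReal.lintegral_prod_norm_pow_le (μ := MeasureTheory.Measure.count) s
      (fun i _ => (measurable_of_countable (f i)).aemeasurable) hw1 hw

theorem Real.sum_prod_rpow_le_prod_sum_rpow {ι κ : Type*} [Fintype κ] (s : Finset ι)
    {f : ι → κ → ℝ} {w : ι → ℝ} (hf : ∀ i ∈ s, ∀ a, 0 ≤ f i a) (hw : ∀ i ∈ s, 0 ≤ w i)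
    (hw1 : ∑ i ∈ s, w i = 1) :
    ∑ a, ∏ i ∈ s, f i a ^ w i ≤ ∏ i ∈ s, (∑ a, f i a) ^ w i := by
  have hsum : ∀ i ∈ s, 0 ≤ ∑ a, f i a := fun i hi => sum_nonneg fun a _ => hf i hi a
  rw [← ENNReal.ofReal_le_ofReal_iff (prod_nonneg fun i hi => Real.rpow_nonneg (hsum i hi) _),
    ENNReal.ofReal_sum_of_nonneg
      fun a _ => prod_nonneg fun i hi => Real.rpow_nonneg (hf i hi a) _,
    ENNReal.ofReal_prod_of_nonneg fun i hi => Real.rpow_nonneg (hsum i hi) _]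
  convert ENNReal.sum_prod_rpow_le_prod_sum_rpow s (fun i a => ENNReal.ofReal (f i a)) hw hw1
    using 2 with a _ i hi
  · rw [ENNReal.ofReal_prod_of_nonneg fun i hi => Real.rpow_nonneg (hf i hi a) _]
    exact prod_congr rfl fun i hi => (ENNReal.ofReal_rpow_of_nonneg (hf i hi a) (hw i hi)).symm
  · rw [← ENNReal.ofReal_rpow_of_nonneg (hsum i hi) (hw i hi),
      ENNReal.ofReal_sum_of_nonneg fun a _ => hf i hi a]

theorem Real.finsetProd_rpow_rpow_comm {ι : Type*} (s : Finset ι) {x : ι → ℝ}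
    (hx : ∀ i ∈ s, 0 ≤ x i) (w : ι → ℝ) (r : ℝ) :
    (∏ i ∈ s, x i ^ w i) ^ r = ∏ i ∈ s, (x i ^ r) ^ w i := by
  rw [← Real.finsetProd_rpow s _ fun i hi => Real.rpow_nonneg (hx i hi) _]
  exact prod_congr rfl fun i hi => by
    rw [← Real.rpow_mul (hx i hi), mul_comm, Real.rpow_mul (hx i hi)]

namespace spectrum

theorem spectralRadius_ne_top {𝕜 A : Type*} [NormedField 𝕜] [NormedRing A] [NormedAlgebra 𝕜 A]
    [CompleteSpace A] (a : A) : spectralRadius 𝕜 a ≠ ∞ :=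
  ne_top_of_le_ne_top
    (ENNReal.mul_ne_top (ENNReal.rpow_ne_top_of_nonneg (by norm_num) ENNReal.coe_ne_top)
      (ENNReal.rpow_ne_top_of_nonneg (by norm_num) ENNReal.coe_ne_top))
    (spectralRadius_le_pow_nnnorm_pow_one_div 𝕜 a 0)

theorem spectralRadius_le_prod_rpow_of_norm_pow_le {A ι : Type*} [NormedRing A]
    [NormedAlgebra ℂ A] [CompleteSpace A] (s : Finset ι) {b : A} {a : ι → A} {w : ι → ℝ}
    (hw : ∀ i ∈ s, 0 ≤ w i) (h : ∀ n : ℕ, ‖b ^ n‖ ≤ ∏ i ∈ s, ‖a i ^ n‖ ^ w i) :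
    spectralRadius ℂ b ≤ ∏ i ∈ s, spectralRadius ℂ (a i) ^ w i := by
  have h_enorm (n : ℕ) : (‖b ^ n‖₊ : ℝ≥0∞) ≤ ∏ i ∈ s, (‖a i ^ n‖₊ : ℝ≥0∞) ^ w i := by
    have := ENNReal.ofReal_le_ofReal (h n)
    rw [ENNReal.ofReal_prod_of_nonneg fun i _ => by positivity,
      prod_congr rfl fun i hi => (ENNReal.ofReal_rpow_of_nonneg (norm_nonneg _) (hw i hi)).symm]
      at this
    simpa only [ofReal_norm, enorm_eq_nnnorm] using this
  have h_root (n : ℕ) : (‖b ^ n‖₊ : ℝ≥0∞) ^ (1 / n : ℝ) ≤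
      ∏ i ∈ s, ((‖a i ^ n‖₊ : ℝ≥0∞) ^ (1 / n : ℝ)) ^ w i := by
    calc (‖b ^ n‖₊ : ℝ≥0∞) ^ (1 / n : ℝ)
        ≤ (∏ i ∈ s, (‖a i ^ n‖₊ : ℝ≥0∞) ^ w i) ^ (1 / n : ℝ) :=
          ENNReal.rpow_le_rpow (h_enorm n) (by positivity)
      _ = ∏ i ∈ s, ((‖a i ^ n‖₊ : ℝ≥0∞) ^ (1 / n : ℝ)) ^ w i := by
          rw [← ENNReal.prod_rpow_of_nonneg (by positivity)]
          simp only [← ENNReal.rpow_mul, mul_comm]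
  refine le_of_tendsto_of_tendsto' (pow_nnnorm_pow_one_div_tendsto_nhds_spectralRadius b)
    (ENNReal.tendsto_finsetProd_of_ne_top s
      (fun i _ => (ENNReal.continuous_rpow_const.tendsto _).comp
        (pow_nnnorm_pow_one_div_tendsto_nhds_spectralRadius (a i)))
      fun i hi => ENNReal.rpow_ne_top_of_nonneg (hw i hi) (spectralRadius_ne_top _)) h_root

end spectrum

attribute [local instance] Matrix.frobeniusSeminormedAddCommGroup
  Matrix.frobeniusNormedAddCommGroup Matrix.frobeniusNormedRing Matrix.frobeniusNormedAlgebra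

theorem Matrix.frobenius_norm_le_of_norm_le {M N : Type*} [Fintype M] [Fintype N] {α : Type*}
    [SeminormedAddCommGroup α] {P Q : Matrix M N α} (h : ∀ i j, ‖P i j‖ ≤ ‖Q i j‖) :
    ‖P‖ ≤ ‖Q‖ := by
  rw [frobenius_norm_def, frobenius_norm_def]
  gcongr with i _ j _
  exact h i j

theorem Matrix.frobenius_norm_map_ofReal_pow {N : Type*} [Fintype N] [DecidableEq N]
    (M : Matrix N N ℝ) (n : ℕ) :
    ‖M.map Complex.ofReal ^ n‖ = ‖M ^ n‖ := by
  rw [← frobenius_norm_map_eq (M ^ n) Complex.ofReal Complex.norm_real]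
  exact congrArg norm (Matrix.map_pow M Complex.ofRealHom n).symm

theorem specRad_le_prod_rpow_of_norm_pow_le {N ι : Type*} [Fintype N] [DecidableEq N]
    (s : Finset ι) {B : Matrix N N ℝ} {A : ι → Matrix N N ℝ} {w : ι → ℝ} (hw : ∀ i ∈ s, 0 ≤ w i)
    (h : ∀ n : ℕ, ‖B ^ n‖ ≤ ∏ i ∈ s, ‖A i ^ n‖ ^ w i) :
    specRad B ≤ ∏ i ∈ s, specRad (A i) ^ w i := by
  have hρ := spectrum.spectralRadius_le_prod_rpow_of_norm_pow_le s hw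
    (b := B.map Complex.ofReal) (a := fun i => (A i).map Complex.ofReal)
    (by simpa only [Matrix.frobenius_norm_map_ofReal_pow] using h)
  have hfin : ∏ i ∈ s, spectralRadius ℂ ((A i).map Complex.ofReal) ^ w i ≠ ∞ :=
    ENNReal.prod_ne_top fun i hi =>
      ENNReal.rpow_ne_top_of_nonneg (hw i hi) (spectrum.spectralRadius_ne_top _)
  simpa only [specRad, ENNReal.toReal_prod, ENNReal.toReal_rpow] using ENNReal.toReal_mono hfin hρ

section hadGeo

variable {m : ℕ} {N : Type*} {A C : Fin m → Matrix N N ℝ} {α : Fin m → ℝ}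

theorem hadGeo_nonneg (hA : ∀ k i j, 0 ≤ A k i j) (i j : N) : 0 ≤ hadGeo A α i j :=
  prod_nonneg fun k _ => Real.rpow_nonneg (hA k i j) _

variable [Fintype N]

theorem hadGeo_mul_hadGeo_le (hA : ∀ k i j, 0 ≤ A k i j) (hC : ∀ k i j, 0 ≤ C k i j)
    (hα : ∀ k, 0 ≤ α k) (hsum : ∑ k, α k = 1) (i j : N) :
    (hadGeo A α * hadGeo C α) i j ≤ hadGeo (fun k => A k * C k) α i j := calc
  (hadGeo A α * hadGeo C α) i j = ∑ l, ∏ k, (A k i l * C k l j) ^ α k := by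
    simp only [Matrix.mul_apply, hadGeo, ← prod_mul_distrib]
    exact sum_congr rfl fun l _ => prod_congr rfl fun k _ =>
      (Real.mul_rpow (hA k i l) (hC k l j)).symm
  _ ≤ ∏ k, (∑ l, A k i l * C k l j) ^ α k :=
    Real.sum_prod_rpow_le_prod_sum_rpow univ (fun k _ l => mul_nonneg (hA k i l) (hC k l j))
      (fun k _ => hα k) hsum
  _ = hadGeo (fun k => A k * C k) α i j := rfl

theorem frobenius_norm_hadGeo_le (hC : ∀ k i j, 0 ≤ C k i j) (hα : ∀ k, 0 ≤ α k)
    (hsum : ∑ k, α k = 1) : ‖hadGeo C α‖ ≤ ∏ k, ‖C k‖ ^ α k := by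
  have hsq (i j : N) : ‖hadGeo C α i j‖ ^ (2 : ℝ) = ∏ k, (‖C k i j‖ ^ (2 : ℝ)) ^ α k := by
    rw [Real.norm_of_nonneg (hadGeo_nonneg hC i j), hadGeo,
      Real.finsetProd_rpow_rpow_comm univ (fun k _ => hC k i j)]
    simp only [Real.norm_of_nonneg (hC _ i j)]
  calc ‖hadGeo C α‖ = (∑ x : N × N, ∏ k, (‖C k x.1 x.2‖ ^ (2 : ℝ)) ^ α k) ^ (1 / 2 : ℝ) := by
        rw [frobenius_norm_def, ← Fintype.sum_prod_type']
        simp only [hsq]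
    _ ≤ (∏ k, (∑ x : N × N, ‖C k x.1 x.2‖ ^ (2 : ℝ)) ^ α k) ^ (1 / 2 : ℝ) := by
        gcongr
        exact Real.sum_prod_rpow_le_prod_sum_rpow univ (fun k _ x => by positivity)
          (fun k _ => hα k) hsum
    _ = ∏ k, ‖C k‖ ^ α k := by
        rw [Real.finsetProd_rpow_rpow_comm univ (fun k _ => by positivity)]
        simp only [frobenius_norm_def, Fintype.sum_prod_type]

variable [DecidableEq N]

theorem hadGeo_pow_le (hA : ∀ k i j, 0 ≤ A k i j) (hα : ∀ k, 0 ≤ α k) (hsum : ∑ k, α k = 1)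
    (p : ℕ) (i j : N) : (hadGeo A α ^ p) i j ≤ hadGeo (fun k => A k ^ p) α i j := by
  have hAp (q : ℕ) (k : Fin m) := Matrix.pow_apply_nonneg (hA k) q
  induction p generalizing i j with
  | zero =>
    rcases eq_or_ne i j with rfl | hij
    · simp [hadGeo]
    · rw [pow_zero, Matrix.one_apply_ne hij]
      exact hadGeo_nonneg (hAp 0) i j
  | succ p ih =>
    calc (hadGeo A α ^ (p + 1)) i j
        = ∑ l, (hadGeo A α ^ p) i l * hadGeo A α l j := by rw [pow_succ, Matrix.mul_apply]
      _ ≤ ∑ l, hadGeo (fun k => A k ^ p) α i l * hadGeo A α l j :=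
        sum_le_sum fun l _ => mul_le_mul_of_nonneg_right (ih i l) (hadGeo_nonneg hA l j)
      _ ≤ hadGeo (fun k => A k ^ p * A k) α i j :=
        hadGeo_mul_hadGeo_le (hAp p) hA hα hsum i j
      _ = hadGeo (fun k => A k ^ (p + 1)) α i j := by simp only [pow_succ]

end hadGeo

theorem stmt3_general {m : ℕ} {N : Type*} [Fintype N] [DecidableEq N]
    (A : Fin m → Matrix N N ℝ) (hA : ∀ k, ∀ i j, 0 ≤ A k i j)
    (α : Fin m → ℝ) (hα : ∀ k, 0 < α k) (hsum : ∑ k, α k = 1) :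
    specRad (hadGeo A α) ≤ ∏ k, specRad (A k) ^ (α k) := by
  have hα₀ (k : Fin m) : 0 ≤ α k := (hα k).le
  have hAn (n : ℕ) (k : Fin m) := Matrix.pow_apply_nonneg (hA k) n
  refine specRad_le_prod_rpow_of_norm_pow_le univ (fun k _ => hα₀ k) fun n => ?_
  calc ‖hadGeo A α ^ n‖ ≤ ‖hadGeo (fun k => A k ^ n) α‖ :=
        Matrix.frobenius_norm_le_of_norm_le fun i j => by
          rw [Real.norm_of_nonneg (Matrix.pow_apply_nonneg (hadGeo_nonneg hA) n i j),
            Real.norm_of_nonneg (hadGeo_nonneg (hAn n) i j)]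
          exact hadGeo_pow_le hA hα₀ hsum n i j
    _ ≤ ∏ k, ‖A k ^ n‖ ^ α k := frobenius_norm_hadGeo_le (hAn n) hα₀ hsum

theorem stmt3 {m : ℕ} (hm : 0 < m) {N : Type*} [Fintype N] [DecidableEq N]
    (A : Fin m → Matrix N N ℝ) (hA : ∀ k, ∀ i j, 0 ≤ A k i j)
    (α : Fin m → ℝ) (hα : ∀ k, 0 < α k) (hsum : ∑ k, α k = 1) :
    specRad (hadGeo A α) ≤ ∏ k, specRad (A k) ^ (α k) :=
  stmt3_general A hA α hα hsum
end

section
/- Let A₁, …, A_m be nonnegative n×n real matrices and P_j = A_j ⋯ A_m A₁ ⋯ A_{j-1}. Then the operator norm (with respect to the Euclidean norm) satisfies ‖(A₁^{(1/m)} ∘ ⋯ ∘ A_m^{(1/m)})^m‖ ≤ ‖P₁^{(1/m)} ∘ ⋯ ∘ P_m^{(1/m)}‖ ≤ ‖P₁‖^{1/m} ⋯ ‖P_m‖^{1/m}. -/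
/-!
Hölder's inequality makes the Hadamard geometric mean `G` of nonnegative matrices
supermultiplicative entrywise: `G(B) * G(C) ≤ G(B * C)`. Applying this `m` times, shifting the
family cyclically at each step, gives `G(A)^m ≤ G(P)` entrywise, and the Euclidean operator norm is
monotone on nonnegative matrices. For the second inequality, Hölder again gives
`yᵀ G(P) x ≤ ∏ₖ (yᵀ Pₖ x)^{1/m} ≤ ∏ₖ ‖Pₖ‖^{1/m} ‖y‖ ‖x‖` for nonnegative `x, y`, and nonnegative
vectors suffice to compute the norm of a nonnegative matrix.
-/

open Matrix

/-- `P_j = A_j A_{j+1} ⋯ A_m A₁ ⋯ A_{j-1}`, the cyclic product starting at `j`. -/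
noncomputable def cycProd {m : ℕ} {N : Type*} [Fintype N] [DecidableEq N]
    (A : Fin m → Matrix N N ℝ) (j : Fin m) : Matrix N N ℝ :=
  (List.ofFn fun k => A (j + k)).prod

open Finset

namespace Real

variable {ι κ : Type*} [Fintype ι] [Fintype κ]

theorem prod_rpow_of_sum_eq_one {a : ℝ} (ha : 0 ≤ a) {w : κ → ℝ} (hw : ∀ k, 0 ≤ w k)
    (hw1 : ∑ k, w k = 1) : ∏ k, a ^ w k = a := by
  rw [← rpow_sum_of_nonneg ha fun k _ => hw k, hw1, rpow_one]

theorem sum_prod_rpow_le_one {f : κ → ι → ℝ} (hf : ∀ k x, 0 ≤ f k x)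
    (hf1 : ∀ k, ∑ x, f k x = 1) {w : κ → ℝ} (hw : ∀ k, 0 ≤ w k) (hw1 : ∑ k, w k = 1) :
    ∑ x, ∏ k, f k x ^ w k ≤ 1 :=
  calc ∑ x, ∏ k, f k x ^ w k
      ≤ ∑ x, ∑ k, w k * f k x := sum_le_sum fun x _ =>
        geom_mean_le_arith_mean_weighted univ w (f · x) (fun k _ => hw k) hw1 fun k _ => hf k x
    _ = 1 := by simp_rw [sum_comm (γ := ι), ← mul_sum, hf1, mul_one, hw1]

theorem sum_prod_rpow_le_prod_sum_rpow_s9 {f : κ → ι → ℝ} (hf : ∀ k x, 0 ≤ f k x)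
    {w : κ → ℝ} (hw : ∀ k, 0 < w k) (hw1 : ∑ k, w k = 1) :
    ∑ x, ∏ k, f k x ^ w k ≤ ∏ k, (∑ x, f k x) ^ w k := by
  set S : κ → ℝ := fun k => ∑ x, f k x
  have hS : ∀ k, 0 ≤ S k := fun k => sum_nonneg fun x _ => hf k x
  by_cases! hS0 : ∃ k, S k = 0
  · obtain ⟨k, hk⟩ := hS0
    have hfk : ∀ x, f k x = 0 := fun x =>
      (sum_eq_zero_iff_of_nonneg fun x _ => hf k x).1 hk x (mem_univ x)
    have hlhs : ∑ x, ∏ k, f k x ^ w k = 0 := sum_eq_zero fun x _ =>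
      prod_eq_zero (mem_univ k) (by rw [hfk x, zero_rpow (hw k).ne'])
    rw [hlhs]
    exact prod_nonneg fun k _ => rpow_nonneg (hS k) _
  have hSpos : ∀ k, 0 < S k := fun k => (hS k).lt_of_ne' (hS0 k)
  have hnormalized := sum_prod_rpow_le_one (f := fun k x => f k x / S k)
    (fun k x => div_nonneg (hf k x) (hS k)) (fun k => by simp [S, ← sum_div, (hSpos k).ne'])
    (fun k => (hw k).le) hw1
  simp_rw [div_rpow (hf _ _) (hS _), prod_div_distrib, ← sum_div] at hnormalized
  exact (div_le_one (prod_pos fun k _ => rpow_pos_of_pos (hSpos k) _)).1 hnormalized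

end Real

namespace Matrix

variable {N : Type*} [Fintype N]

theorem mul_apply_nonneg_s9 {B C : Matrix N N ℝ} (hB : ∀ i j, 0 ≤ B i j) (hC : ∀ i j, 0 ≤ C i j)
    (i j : N) : 0 ≤ (B * C) i j :=
  sum_nonneg fun l _ => mul_nonneg (hB i l) (hC l j)

theorem mul_apply_le_mul_apply_s9 {B C C' : Matrix N N ℝ} (hB : ∀ i j, 0 ≤ B i j)
    (hC : ∀ i j, C i j ≤ C' i j) (i j : N) : (B * C) i j ≤ (B * C') i j :=
  sum_le_sum fun l _ => mul_le_mul_of_nonneg_left (hC l j) (hB i l)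

theorem abs_mulVec_apply_le {M : Matrix N N ℝ} (hM : ∀ i j, 0 ≤ M i j) (x : N → ℝ) (i : N) :
    |(M *ᵥ x) i| ≤ (M *ᵥ fun j => |x j|) i :=
  (abs_sum_le_sum_abs _ _).trans_eq <| sum_congr rfl fun j _ => by
    rw [abs_mul, abs_of_nonneg (hM i j)]

theorem dotProduct_mulVec_eq_sum (M : Matrix N N ℝ) (x y : N → ℝ) :
    y ⬝ᵥ M *ᵥ x = ∑ p : N × N, y p.1 * M p.1 p.2 * x p.2 := by
  simp only [dotProduct, mulVec, mul_sum, Fintype.sum_prod_type, mul_assoc]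

theorem dotProduct_mulVec_nonneg {M : Matrix N N ℝ}
    (hM : ∀ i j, 0 ≤ M i j) {x y : N → ℝ} (hx : ∀ i, 0 ≤ x i) (hy : ∀ i, 0 ≤ y i) :
    0 ≤ y ⬝ᵥ M *ᵥ x :=
  sum_nonneg fun i _ => mul_nonneg (hy i) (sum_nonneg fun j _ => mul_nonneg (hM i j) (hx j))

end Matrix

theorem EuclideanSpace.norm_le_norm_of_abs_le {N : Type*} [Fintype N] {x y : EuclideanSpace ℝ N}
    (h : ∀ i, |x i| ≤ |y i|) : ‖x‖ ≤ ‖y‖ := by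
  simp only [EuclideanSpace.norm_eq, Real.norm_eq_abs]
  exact Real.sqrt_le_sqrt <| sum_le_sum fun i _ => pow_le_pow_left₀ (abs_nonneg _) (h i) 2

section L2OpNorm

variable {N : Type*} [Fintype N] [DecidableEq N]

theorem l2OpNorm_nonneg (M : Matrix N N ℝ) : 0 ≤ l2OpNorm M := norm_nonneg _

theorem dotProduct_mulVec_le_l2OpNorm_mul (M : Matrix N N ℝ) (x y : EuclideanSpace ℝ N) :
    y ⬝ᵥ M *ᵥ x ≤ l2OpNorm M * ‖y‖ * ‖x‖ := by
  rw [← Matrix.inner_toEuclideanCLM]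
  calc _ ≤ ‖y‖ * ‖Matrix.toEuclideanCLM (𝕜 := ℝ) M x‖ := real_inner_le_norm _ _
    _ ≤ ‖y‖ * (l2OpNorm M * ‖x‖) := by gcongr; exact ContinuousLinearMap.le_opNorm _ _
    _ = _ := by ring

theorem l2OpNorm_le_of_nonneg {M : Matrix N N ℝ} (hM : ∀ i j, 0 ≤ M i j) {C : ℝ} (hC : 0 ≤ C)
    (h : ∀ x : EuclideanSpace ℝ N, (∀ i, 0 ≤ x i) →
      ‖Matrix.toEuclideanCLM (𝕜 := ℝ) M x‖ ≤ C * ‖x‖) :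
    l2OpNorm M ≤ C := by
  refine ContinuousLinearMap.opNorm_le_bound _ hC fun x => ?_
  set xabs : EuclideanSpace ℝ N := WithLp.toLp 2 fun i => |x i|
  calc _ ≤ ‖Matrix.toEuclideanCLM (𝕜 := ℝ) M xabs‖ :=
        EuclideanSpace.norm_le_norm_of_abs_le fun i =>
          (Matrix.abs_mulVec_apply_le hM x i).trans (le_abs_self _)
    _ ≤ C * ‖xabs‖ := h xabs fun i => abs_nonneg _
    _ = C * ‖x‖ := by simp [xabs, EuclideanSpace.norm_eq]

theorem l2OpNorm_le_l2OpNorm_of_le {M M' : Matrix N N ℝ} (hM : ∀ i j, 0 ≤ M i j)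
    (h : ∀ i j, M i j ≤ M' i j) : l2OpNorm M ≤ l2OpNorm M' := by
  refine l2OpNorm_le_of_nonneg hM (l2OpNorm_nonneg M') fun x hx => ?_
  calc _ ≤ ‖Matrix.toEuclideanCLM (𝕜 := ℝ) M' x‖ := by
        refine EuclideanSpace.norm_le_norm_of_abs_le fun i => abs_le_abs_of_nonneg ?_ ?_
        · exact sum_nonneg fun j _ => mul_nonneg (hM i j) (hx j)
        · exact sum_le_sum fun j _ => mul_le_mul_of_nonneg_right (h i j) (hx j)
    _ ≤ l2OpNorm M' * ‖x‖ := ContinuousLinearMap.le_opNorm _ _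

end L2OpNorm

section HadGeo

variable {N : Type*} {m : ℕ}

theorem hadGeo_apply_nonneg {A : Fin m → Matrix N N ℝ} (hA : ∀ k i j, 0 ≤ A k i j)
    (α : Fin m → ℝ) (i j : N) : 0 ≤ hadGeo A α i j :=
  prod_nonneg fun k _ => Real.rpow_nonneg (hA k i j) _

theorem hadGeo_comp_equiv (A : Fin m → Matrix N N ℝ) (e : Fin m ≃ Fin m) (c : ℝ) :
    hadGeo (A ∘ e) (fun _ => c) = hadGeo A (fun _ => c) := by
  ext i j
  exact e.prod_comp fun k => A k i j ^ c

theorem one_apply_le_hadGeo_one [DecidableEq N] (α : Fin m → ℝ) (i j : N) :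
    (1 : Matrix N N ℝ) i j ≤ hadGeo (fun _ => 1) α i j := by
  by_cases hij : i = j
  · subst hij
    simp [hadGeo]
  · rw [Matrix.one_apply_ne hij]
    exact hadGeo_apply_nonneg (fun _ => Matrix.zero_le_one_elem) α i j

variable [Fintype N] {w : Fin m → ℝ}

theorem hadGeo_mul_apply_le {B C : Fin m → Matrix N N ℝ} (hB : ∀ k i j, 0 ≤ B k i j)
    (hC : ∀ k i j, 0 ≤ C k i j) (hw : ∀ k, 0 < w k) (hw1 : ∑ k, w k = 1) (i j : N) :
    (hadGeo B w * hadGeo C w) i j ≤ hadGeo (fun k => B k * C k) w i j := by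
  have hterm : ∀ l, hadGeo B w i l * hadGeo C w l j = ∏ k, (B k i l * C k l j) ^ w k :=
    fun l => by simp only [hadGeo, ← prod_mul_distrib, Real.mul_rpow (hB _ i l) (hC _ l j)]
  simp only [Matrix.mul_apply, hterm]
  exact Real.sum_prod_rpow_le_prod_sum_rpow_s9 (fun k l => mul_nonneg (hB k i l) (hC k l j)) hw hw1

theorem dotProduct_hadGeo_mulVec_le {B : Fin m → Matrix N N ℝ} (hB : ∀ k i j, 0 ≤ B k i j)
    (hw : ∀ k, 0 < w k) (hw1 : ∑ k, w k = 1) {x y : N → ℝ} (hx : ∀ i, 0 ≤ x i)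
    (hy : ∀ i, 0 ≤ y i) :
    y ⬝ᵥ hadGeo B w *ᵥ x ≤ ∏ k, (y ⬝ᵥ B k *ᵥ x) ^ w k := by
  have hterm : ∀ i j, y i * hadGeo B w i j * x j = ∏ k, (y i * B k i j * x j) ^ w k := by
    intro i j
    have hw0 : ∀ k, 0 ≤ w k := fun k => (hw k).le
    calc y i * hadGeo B w i j * x j
        = (∏ k, y i ^ w k) * (∏ k, B k i j ^ w k) * ∏ k, x j ^ w k := by
          rw [Real.prod_rpow_of_sum_eq_one (hy i) hw0 hw1,
            Real.prod_rpow_of_sum_eq_one (hx j) hw0 hw1, hadGeo]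
      _ = ∏ k, (y i * B k i j * x j) ^ w k := by
          simp only [← prod_mul_distrib, Real.mul_rpow (mul_nonneg (hy i) (hB _ i j)) (hx j),
            Real.mul_rpow (hy i) (hB _ i j)]
  simp only [Matrix.dotProduct_mulVec_eq_sum, hterm]
  exact Real.sum_prod_rpow_le_prod_sum_rpow_s9
    (fun k (p : N × N) => mul_nonneg (mul_nonneg (hy p.1) (hB k p.1 p.2)) (hx p.2)) hw hw1

theorem l2OpNorm_hadGeo_le [DecidableEq N] {B : Fin m → Matrix N N ℝ} (hB : ∀ k i j, 0 ≤ B k i j)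
    (hw : ∀ k, 0 < w k) (hw1 : ∑ k, w k = 1) :
    l2OpNorm (hadGeo B w) ≤ ∏ k, l2OpNorm (B k) ^ w k := by
  set C := ∏ k, l2OpNorm (B k) ^ w k
  have hC : 0 ≤ C := prod_nonneg fun k _ => Real.rpow_nonneg (l2OpNorm_nonneg _) _
  refine l2OpNorm_le_of_nonneg (hadGeo_apply_nonneg hB w) hC fun x hx => ?_
  set v := Matrix.toEuclideanCLM (𝕜 := ℝ) (hadGeo B w) x
  have hv : ∀ i, 0 ≤ v i := fun i =>
    sum_nonneg fun j _ => mul_nonneg (hadGeo_apply_nonneg hB w i j) (hx j)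
  have hvx : ‖v‖ ^ 2 ≤ C * ‖v‖ * ‖x‖ :=
    calc ‖v‖ ^ 2 = v ⬝ᵥ hadGeo B w *ᵥ x := by
          rw [← real_inner_self_eq_norm_sq, Matrix.inner_toEuclideanCLM]
      _ ≤ ∏ k, (v ⬝ᵥ B k *ᵥ x) ^ w k := dotProduct_hadGeo_mulVec_le hB hw hw1 hx hv
      _ ≤ ∏ k, (l2OpNorm (B k) * ‖v‖ * ‖x‖) ^ w k := by
          refine prod_le_prod (fun k _ => Real.rpow_nonneg ?_ _) fun k _ => ?_
          · exact Matrix.dotProduct_mulVec_nonneg (hB k) hx hv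
          · exact Real.rpow_le_rpow (Matrix.dotProduct_mulVec_nonneg (hB k) hx hv)
              (dotProduct_mulVec_le_l2OpNorm_mul _ _ _) (hw k).le
      _ = C * ‖v‖ * ‖x‖ := by
          have hw0 : ∀ k, 0 ≤ w k := fun k => (hw k).le
          have hBv : ∀ k, 0 ≤ l2OpNorm (B k) * ‖v‖ := fun k =>
            mul_nonneg (l2OpNorm_nonneg _) (norm_nonneg v)
          simp only [Real.mul_rpow (hBv _) (norm_nonneg x),
            Real.mul_rpow (l2OpNorm_nonneg _) (norm_nonneg v), prod_mul_distrib,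
            Real.prod_rpow_of_sum_eq_one (norm_nonneg v) hw0 hw1,
            Real.prod_rpow_of_sum_eq_one (norm_nonneg x) hw0 hw1, C]
  nlinarith [norm_nonneg v, mul_nonneg hC (norm_nonneg x)]

end HadGeo

section Cyclic

variable {N : Type*} [Fintype N] [DecidableEq N] {m : ℕ} [NeZero m]

theorem one_div_natCast_pos : (0 : ℝ) < 1 / m :=
  one_div_pos.2 (Nat.cast_pos.2 (NeZero.pos m))

theorem sum_fin_const_one_div : ∑ _ : Fin m, (1 : ℝ) / m = 1 := by
  simp [NeZero.ne m]

def cycPartial (A : Fin m → Matrix N N ℝ) : ℕ → Fin m → Matrix N N ℝ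
  | 0, _ => 1
  | s + 1, k => A k * cycPartial A s (k + 1)

theorem cycPartial_apply_nonneg {A : Fin m → Matrix N N ℝ} (hA : ∀ k i j, 0 ≤ A k i j)
    (s : ℕ) (k : Fin m) (i j : N) : 0 ≤ cycPartial A s k i j := by
  induction s generalizing k i j with
  | zero => exact Matrix.zero_le_one_elem i j
  | succ s ih => exact Matrix.mul_apply_nonneg_s9 (hA k) (ih (k + 1)) i j

open Fin.NatCast in
theorem cycPartial_eq_prod_ofFn (A : Fin m → Matrix N N ℝ) (s : ℕ) (k : Fin m) :
    cycPartial A s k = (List.ofFn fun t : Fin s => A (k + (t : ℕ))).prod := by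
  induction s generalizing k with
  | zero => rfl
  | succ s ih =>
    rw [List.ofFn_succ, List.prod_cons, cycPartial, ih]
    simp only [Fin.val_zero, Nat.cast_zero, add_zero, Fin.val_succ, Nat.cast_add, Nat.cast_one]
    simp only [add_assoc, add_comm (1 : Fin m)]

theorem cycPartial_self (A : Fin m → Matrix N N ℝ) : cycPartial A m = cycProd A := by
  ext1 k
  simp only [cycPartial_eq_prod_ofFn, cycProd, Fin.cast_val_eq_self]

theorem cycProd_apply_nonneg {A : Fin m → Matrix N N ℝ} (hA : ∀ k i j, 0 ≤ A k i j) (k : Fin m)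
    (i j : N) : 0 ≤ cycProd A k i j :=
  cycPartial_self A ▸ cycPartial_apply_nonneg hA m k i j

theorem hadGeo_pow_apply_le {A : Fin m → Matrix N N ℝ} (hA : ∀ k i j, 0 ≤ A k i j) (s : ℕ)
    (i j : N) :
    (hadGeo A (fun _ => (1 : ℝ) / m) ^ s) i j ≤ hadGeo (cycPartial A s) (fun _ => 1 / m) i j := by
  induction s generalizing i j with
  | zero => exact one_apply_le_hadGeo_one _ i j
  | succ s ih =>
    have hshift := hadGeo_comp_equiv (cycPartial A s) (Equiv.addRight 1) (1 / m)
    calc (hadGeo A (fun _ => (1 : ℝ) / m) ^ (s + 1)) i j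
        ≤ (hadGeo A (fun _ => 1 / m) * hadGeo (cycPartial A s ∘ Equiv.addRight 1) fun _ => 1 / m)
            i j := by
          rw [pow_succ', hshift]
          exact Matrix.mul_apply_le_mul_apply_s9 (hadGeo_apply_nonneg hA _) ih i j
      _ ≤ hadGeo (cycPartial A (s + 1)) (fun _ => 1 / m) i j :=
          hadGeo_mul_apply_le hA (fun k => cycPartial_apply_nonneg hA s (k + 1))
            (fun _ => one_div_natCast_pos) sum_fin_const_one_div i j

end Cyclic

theorem stmt9 {m : ℕ} (hm : 0 < m) {N : Type*} [Fintype N] [DecidableEq N]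
    (A : Fin m → Matrix N N ℝ) (hA : ∀ k, ∀ i j, 0 ≤ A k i j) :
    l2OpNorm ((hadGeo A (fun _ => (1 : ℝ) / m)) ^ m) ≤
        l2OpNorm (hadGeo (cycProd A) (fun _ => (1 : ℝ) / m)) ∧
      l2OpNorm (hadGeo (cycProd A) (fun _ => (1 : ℝ) / m)) ≤
        ∏ j, l2OpNorm (cycProd A j) ^ ((1 : ℝ) / m) := by
  have : NeZero m := ⟨hm.ne'⟩
  refine ⟨l2OpNorm_le_l2OpNorm_of_le (Matrix.pow_apply_nonneg (hadGeo_apply_nonneg hA _) m)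
    fun i j => ?_, l2OpNorm_hadGeo_le (cycProd_apply_nonneg hA) (fun _ => one_div_natCast_pos)
      sum_fin_const_one_div⟩
  simpa only [cycPartial_self] using hadGeo_pow_apply_le hA m i j
end
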